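/- arXiv:1101.3481 — 2 statements merged into one kernel-verified Lean document; each statement's English description precedes it below -/
import Mathlib

section
/- For any integer n ≥ 2, the sum over l = 1 to n-1 of 1/(2 - ζ^l - ζ^{-l}), where ζ = exp(2πi/n) is a primitive n-th root of unity, equals (n² − 1)/12. -/
/-!
For an `n`-th root of unity `z ≠ 1` one has `1 / (2 - z - z⁻¹) = -z / (1 - z)²`, and the
telescoping identity `(1 - z)² ∑_{k<n} k (n - k) zᵏ = 2 n z` expands this as
`-(1 / 2n) ∑_{k<n} k (n - k) zᵏ`. Summing over `z = ζˡ`, `1 ≤ l < n`, and exchanging the sums, each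
`k ≠ 0` contributes `∑_{1 ≤ l < n} ζᵏˡ = -1`, so the total is `(1 / 2n) ∑_{k<n} k (n - k)`,
which equals `(n² - 1) / 12`.
-/

open Finset Complex

section CommRing

variable {R : Type*} [CommRing R]

lemma one_sub_sq_mul_sum_range_natCast_mul_pow (z : R) (n : ℕ) :
    (1 - z) ^ 2 * ∑ k ∈ range n, (k : R) * z ^ k
      = z - n * z ^ n + n * z ^ (n + 1) - z ^ (n + 1) := by
  induction n with
  | zero => simp
  | succ m ih =>
    rw [sum_range_succ]
    push_cast
    linear_combination ih

lemma one_sub_sq_mul_sum_range_natCast_mul_sub_mul_pow (z : R) (n : ℕ) :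
    (1 - z) ^ 2 * ∑ k ∈ range n, (k : R) * (n - k) * z ^ k
      = (n + 1) * z + 2 - 2 * ∑ k ∈ range (n + 1), z ^ k + (n - 1) * z ^ (n + 1) := by
  induction n with
  | zero => simp
  | succ m ih =>
    have hsplit : ∀ k : ℕ, (k : R) * (m + 1 - k) * z ^ k
        = (k : R) * (m - k) * z ^ k + k * z ^ k := fun k => by ring
    have hweighted := one_sub_sq_mul_sum_range_natCast_mul_pow z (m + 1)
    push_cast at hweighted ⊢
    rw [sum_congr rfl fun k _ => hsplit k, sum_add_distrib, sum_range_succ _ m,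
      sum_range_succ (fun k => z ^ k) (m + 1)]
    linear_combination ih + hweighted

lemma one_sub_sq_mul_sum_range_natCast_mul_sub_mul_pow_of_pow_eq_one {z : R} {n : ℕ}
    (hz : z ^ n = 1) :
    (1 - z) ^ 2 * ∑ k ∈ range n, (k : R) * (n - k) * z ^ k
      = 2 * n * z - 2 * ∑ k ∈ range n, z ^ k := by
  rw [one_sub_sq_mul_sum_range_natCast_mul_sub_mul_pow, sum_range_succ, pow_succ, hz]
  ring

lemma sum_range_natCast_mul_two (n : ℕ) : (∑ k ∈ range n, (k : R)) * 2 = n * (n - 1) := by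
  induction n with
  | zero => simp
  | succ m ih =>
    rw [sum_range_succ]
    push_cast
    linear_combination ih

lemma sum_range_natCast_mul_sub_mul_six (n : ℕ) :
    (∑ k ∈ range n, (k : R) * (n - k)) * 6 = n * (n ^ 2 - 1) := by
  induction n with
  | zero => simp
  | succ m ih =>
    have hsplit : ∀ k : ℕ, (k : R) * (m + 1 - k) = k * (m - k) + k := fun k => by ring
    have hgauss := sum_range_natCast_mul_two (R := R) (m + 1)
    push_cast at hgauss ⊢
    rw [sum_congr rfl fun k _ => hsplit k, sum_add_distrib, sum_range_succ _ m]
    linear_combination ih + 3 * hgauss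

end CommRing

section Field

variable {K : Type*} [Field K] {z : K} {n : ℕ}

lemma geom_sum_eq_zero_of_pow_eq_one (hz : z ^ n = 1) (hz1 : z ≠ 1) :
    ∑ k ∈ range n, z ^ k = 0 := by
  rw [geom_sum_eq hz1, hz, sub_self, zero_div]

lemma sum_Ico_one_pow_eq_neg_one (hn : n ≠ 0) (hz : z ^ n = 1) (hz1 : z ≠ 1) :
    ∑ k ∈ Ico 1 n, z ^ k = -1 := by
  have h := geom_sum_eq_zero_of_pow_eq_one hz hz1
  rw [range_eq_Ico, sum_eq_sum_Ico_succ_bot (Nat.pos_of_ne_zero hn), pow_zero] at h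
  linear_combination h

lemma one_div_two_sub_sub_inv_eq [CharZero K] (hn : n ≠ 0) (hz : z ^ n = 1) (hz1 : z ≠ 1) :
    1 / (2 - z - z⁻¹) = -(∑ k ∈ range n, (k : K) * (n - k) * z ^ k) / (2 * n) := by
  have hz0 : z ≠ 0 := by rintro rfl; simp [zero_pow hn] at hz
  have h1z : 1 - z ≠ 0 := sub_ne_zero.mpr (Ne.symm hz1)
  have hsum := one_sub_sq_mul_sum_range_natCast_mul_sub_mul_pow_of_pow_eq_one hz
  rw [geom_sum_eq_zero_of_pow_eq_one hz hz1, mul_zero, sub_zero] at hsum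
  have hn' : (n : K) ≠ 0 := Nat.cast_ne_zero.mpr hn
  have hden : 2 - z - z⁻¹ = -(1 - z) ^ 2 / z := by field_simp; ring
  rw [hden, div_eq_div_iff (by simp [hz0, h1z]) (by simp [hn'])]
  field_simp
  linear_combination -hsum

end Field

theorem stmt0 (n : ℕ) (hn : 2 ≤ n) :
    ∑ l ∈ Finset.Icc 1 (n - 1),
      1 / (2 - Complex.exp (2 * Real.pi * Complex.I / n) ^ (l : ℤ)
            - Complex.exp (2 * Real.pi * Complex.I / n) ^ (-(l : ℤ))) =
      ((n : ℂ) ^ 2 - 1) / 12 := by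
  set ζ : ℂ := exp (2 * Real.pi * I / n)
  have hn0 : n ≠ 0 := by omega
  have hζ : IsPrimitiveRoot ζ n := isPrimitiveRoot_exp n hn0
  have hroot (k : ℕ) : (ζ ^ k) ^ n = 1 := by rw [pow_right_comm, hζ.pow_eq_one, one_pow]
  have hne (k : ℕ) (hk : k ∈ Ico 1 n) : ζ ^ k ≠ 1 :=
    hζ.pow_ne_one_of_pos_of_lt (by simp at hk; omega) (mem_Ico.mp hk).2
  have hIcc : Icc 1 (n - 1) = Ico 1 n := by ext; simp; omega
  calc _ = ∑ l ∈ Ico 1 n, -(∑ k ∈ range n, (k : ℂ) * (n - k) * (ζ ^ k) ^ l) / (2 * n) := by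
          refine sum_congr hIcc fun l hl => ?_
          rw [zpow_neg, zpow_natCast, one_div_two_sub_sub_inv_eq hn0 (hroot l) (hne l hl)]
          simp_rw [pow_right_comm ζ l]
    _ = -(∑ k ∈ range n, (k : ℂ) * (n - k) * ∑ l ∈ Ico 1 n, (ζ ^ k) ^ l) / (2 * n) := by
          simp only [← sum_div, ← sum_neg_distrib, mul_sum]
          rw [sum_comm]
    _ = -(∑ k ∈ range n, (k : ℂ) * (n - k) * -1) / (2 * n) := by
          congr 2
          refine sum_congr rfl fun k hk => ?_
          rcases eq_or_ne k 0 with rfl | hk0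
          · simp
          · rw [sum_Ico_one_pow_eq_neg_one hn0 (hroot k) (hne k (by simp at hk ⊢; omega))]
    _ = _ := by
          rw [← sum_mul, mul_neg_one, neg_neg, div_eq_div_iff (by simp [hn0]) (by norm_num)]
          linear_combination 2 * sum_range_natCast_mul_sub_mul_six (R := ℂ) n
end

section
/- For any positive integer n, (1/n) · Σ_{l=1}^{n−1} 1/(2 − exp(2πil/n) − exp(−2πil/n)) = (1/12)(n − 1/n). -/
/-! For `ζ ^ n = 1`, `ζ ≠ 1`, the sum `S(ζ) = ∑_{k<n} k ζ^k` satisfies `(1 - ζ) S(ζ) = -n`, so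
`1 / (2 - ζ - ζ⁻¹) = 1 / ((1 - ζ)(1 - ζ⁻¹)) = S(ζ) S(ζ⁻¹) / n²`. Summing over the powers of a
primitive root and adding the missing term `l = 0`, Parseval's identity for the discrete Fourier
transform turns the sum into `(n ∑ k² - (∑ k)²) / n² = (n² - 1) / 12`. -/

open Finset

section Sums

variable {R : Type*} [CommRing R]

theorem two_mul_sum_range_natCast (n : ℕ) :
    2 * ∑ k ∈ range n, (k : R) = n * (n - 1) := by
  induction n with
  | zero => simp
  | succ m ih => rw [sum_range_succ, mul_add, ih]; push_cast; ring

theorem six_mul_sum_range_natCast_sq (n : ℕ) :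
    6 * ∑ k ∈ range n, (k : R) ^ 2 = n * (n - 1) * (2 * n - 1) := by
  induction n with
  | zero => simp
  | succ m ih => rw [sum_range_succ, mul_add, ih]; push_cast; ring

theorem one_sub_mul_sum_range_natCast_mul_pow (x : R) (n : ℕ) :
    (1 - x) * ∑ k ∈ range n, (k : R) * x ^ k = ∑ k ∈ range n, x ^ k - 1 - (n - 1) * x ^ n := by
  induction n with
  | zero => simp
  | succ m ih => rw [sum_range_succ, sum_range_succ, mul_add, ih]; push_cast; ring

end Sums

variable {K : Type*} [Field K] {ζ : K} {n : ℕ}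

theorem one_sub_mul_sum_range_natCast_mul_pow_of_pow_eq_one (hζn : ζ ^ n = 1) (hζ1 : ζ ≠ 1) :
    (1 - ζ) * ∑ k ∈ range n, (k : K) * ζ ^ k = -n := by
  rw [one_sub_mul_sum_range_natCast_mul_pow, geom_sum_eq hζ1, hζn]
  ring

theorem one_div_two_sub_sub_inv_of_pow_eq_one (hζn : ζ ^ n = 1) (hζ1 : ζ ≠ 1) (hn : (n : K) ≠ 0) :
    1 / (2 - ζ - ζ⁻¹) =
      (∑ k ∈ range n, (k : K) * ζ ^ k) * (∑ k ∈ range n, (k : K) * ζ⁻¹ ^ k) / n ^ 2 := by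
  have hζ0 : ζ ≠ 0 := by
    rintro rfl
    exact zero_ne_one ((zero_pow (by rintro rfl; simp at hn)).symm.trans hζn)
  have h := one_sub_mul_sum_range_natCast_mul_pow_of_pow_eq_one hζn hζ1
  have h' := one_sub_mul_sum_range_natCast_mul_pow_of_pow_eq_one (by rw [inv_pow, hζn, inv_one])
    (inv_ne_one.mpr hζ1)
  have hfactor : 2 - ζ - ζ⁻¹ = (1 - ζ) * (1 - ζ⁻¹) := by field_simp; ring
  have hne : 2 - ζ - ζ⁻¹ ≠ 0 := by
    rw [hfactor]
    exact mul_ne_zero (sub_ne_zero.mpr hζ1.symm) (sub_ne_zero.mpr (inv_ne_one.mpr hζ1).symm)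
  rw [div_eq_div_iff hne (pow_ne_zero 2 hn), hfactor]
  linear_combination (-(1 - ζ⁻¹) * ∑ k ∈ range n, (k : K) * ζ⁻¹ ^ k) * h + n * h'

namespace IsPrimitiveRoot

theorem sum_range_pow_mul_inv_pow (hζ : IsPrimitiveRoot ζ n) {k j : ℕ} (hk : k < n) (hj : j < n) :
    ∑ l ∈ range n, (ζ ^ k * ζ⁻¹ ^ j) ^ l = if k = j then (n : K) else 0 := by
  have hζ0 : ζ ≠ 0 := hζ.ne_zero (by omega)
  split_ifs with hkj
  · subst hkj; simp [hζ0]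
  · have hω1 : ζ ^ k * ζ⁻¹ ^ j ≠ 1 := by
      rw [inv_pow, ← div_eq_mul_inv, Ne, div_eq_one_iff_eq (pow_ne_zero _ hζ0)]
      exact fun h => hkj (hζ.pow_inj hk hj h)
    rw [geom_sum_eq hω1, mul_pow, ← pow_mul, ← pow_mul, mul_comm k, mul_comm j, pow_mul, pow_mul,
      hζ.pow_eq_one, inv_pow, hζ.pow_eq_one]
    simp

theorem sum_range_mul_sum_range_inv_eq_mul_sum_sq (hζ : IsPrimitiveRoot ζ n) (f : ℕ → K) :
    ∑ l ∈ range n, (∑ k ∈ range n, f k * (ζ ^ l) ^ k) * (∑ j ∈ range n, f j * (ζ ^ l)⁻¹ ^ j) =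
      n * ∑ k ∈ range n, f k ^ 2 := by
  calc _ = ∑ k ∈ range n, ∑ j ∈ range n, f k * f j * ∑ l ∈ range n, (ζ ^ k * ζ⁻¹ ^ j) ^ l := by
        simp_rw [sum_mul_sum, mul_sum]
        rw [sum_comm]
        refine sum_congr rfl fun k _ => ?_
        rw [sum_comm]
        refine sum_congr rfl fun j _ => sum_congr rfl fun l _ => ?_
        ring
    _ = ∑ k ∈ range n, ∑ j ∈ range n, if k = j then f k * f j * n else 0 := by
        refine sum_congr rfl fun k hk => sum_congr rfl fun j hj => ?_
        rw [hζ.sum_range_pow_mul_inv_pow (mem_range.1 hk) (mem_range.1 hj), mul_ite, mul_zero]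
    _ = n * ∑ k ∈ range n, f k ^ 2 := by
        rw [mul_sum]
        refine sum_congr rfl fun k hk => ?_
        rw [sum_ite_eq, if_pos hk]
        ring

theorem sum_Icc_one_div_two_sub_pow_sub_inv [CharZero K] (hζ : IsPrimitiveRoot ζ n) (hn : 0 < n) :
    ∑ l ∈ Icc 1 (n - 1), 1 / (2 - ζ ^ l - (ζ ^ l)⁻¹) = ((n : K) ^ 2 - 1) / 12 := by
  have hn' : (n : K) ≠ 0 := Nat.cast_ne_zero.2 hn.ne'
  have hterm : ∀ l ∈ Icc 1 (n - 1), 1 / (2 - ζ ^ l - (ζ ^ l)⁻¹) =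
      (∑ k ∈ range n, (k : K) * (ζ ^ l) ^ k) * (∑ k ∈ range n, (k : K) * (ζ ^ l)⁻¹ ^ k) / n ^ 2 := by
    intro l hl
    rw [mem_Icc] at hl
    exact one_div_two_sub_sub_inv_of_pow_eq_one
      (by rw [← pow_mul, mul_comm, pow_mul, hζ.pow_eq_one, one_pow])
      (hζ.pow_ne_one_of_pos_of_lt (by omega) (by omega)) hn'
  have hIcc : Icc 1 (n - 1) = (range n).erase 0 := by
    ext l
    simp only [mem_Icc, mem_erase, mem_range]
    omega
  have h2 := two_mul_sum_range_natCast (R := K) n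
  have h6 := six_mul_sum_range_natCast_sq (R := K) n
  rw [sum_congr rfl hterm, ← sum_div, hIcc, sum_erase_eq_sub (mem_range.2 hn),
    hζ.sum_range_mul_sum_range_inv_eq_mul_sum_sq]
  simp only [pow_zero, inv_one, one_pow, mul_one]
  rw [div_eq_div_iff (pow_ne_zero 2 hn') (by norm_num)]
  linear_combination (2 * n) * h6 - 3 * (2 * ∑ k ∈ range n, (k : K) + n * (n - 1)) * h2

end IsPrimitiveRoot

theorem stmt5 (n : ℕ) (hn : 1 ≤ n) :
    (1 / (n : ℂ)) * ∑ l ∈ Finset.Icc 1 (n - 1),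
      1 / (2 - Complex.exp (2 * Real.pi * Complex.I * l / n)
            - Complex.exp (-(2 * Real.pi * Complex.I * l / n))) =
      (1 / 12) * ((n : ℂ) - 1 / n) := by
  have hn0 : (n : ℂ) ≠ 0 := Nat.cast_ne_zero.2 (by omega)
  have hexp (l : ℕ) : Complex.exp (2 * Real.pi * Complex.I * l / n) =
      Complex.exp (2 * Real.pi * Complex.I / n) ^ l := by
    rw [← Complex.exp_nat_mul]
    ring_nf
  simp only [Complex.exp_neg, hexp]
  rw [(Complex.isPrimitiveRoot_exp n (by omega)).sum_Icc_one_div_two_sub_pow_sub_inv hn]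
  field_simp
end
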